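/- Let T be a closed M-tableau for a set of M-clauses C, and let T' be obtained from T by a single application of the Separation rule to a node n of T with child μ labelled l = (L, t, S), producing the new child labelled (L, t, S2). Then at most one branch of T' is not closed, and any non-closed branch of T' necessarily contains the node labelled (L, t, S2). In particular, if S2 is empty then T' is closed. -/

import Mathlib

namespace MTab

/-- Variables: ordinary variables and abstraction variables. -/
inductive Var : Type
  | ord : ℕ → Var
  | abs : ℕ → Var
  deriving DecidableEq

def Var.isAbs : Var → Prop
  | .abs _ => True
  | .ord _ => False

/-- First-order terms over function symbols `F`. -/
inductive Term (F : Type) : Type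
  | var : Var → Term F
  | fn : F → List (Term F) → Term F

/-- Substitutions. -/
abbrev Subst (F : Type) := Var → Term F

def Term.subst {F : Type} (σ : Subst F) : Term F → Term F
  | .var v => σ v
  | .fn f ts => .fn f (ts.attach.map (fun x => Term.subst σ x.1))
  decreasing_by have := List.sizeOf_lt_of_mem x.2; simp only [Term.fn.sizeOf_spec]; omega

def Term.varList {F : Type} : Term F → List Var
  | .var v => [v]
  | .fn _ ts => (ts.attach.map (fun x => Term.varList x.1)).flatten
  decreasing_by have := List.sizeOf_lt_of_mem x.2; simp only [Term.fn.sizeOf_spec]; omega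

def Term.vars {F : Type} (t : Term F) : Set Var := {v | v ∈ t.varList}

def Subst.idS {F : Type} : Subst F := fun v => Term.var v

def Subst.dom {F : Type} (σ : Subst F) : Set Var := {v | σ v ≠ Term.var v}

def Subst.vars {F : Type} (σ : Subst F) : Set Var :=
  σ.dom ∪ {v | ∃ w ∈ σ.dom, v ∈ Term.vars (σ w)}

/-- Full composition: apply `σ` first, then `τ`. -/
def Subst.comp {F : Type} (σ τ : Subst F) : Subst F := fun v => Term.subst τ (σ v)

open Classical in
/-- Composition of `σ` with `τ`, restricted to the domain of `σ`. -/
noncomputable def Subst.compOn {F : Type} (σ τ : Subst F) : Subst F :=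
  fun v => if v ∈ σ.dom then Term.subst τ (σ v) else Term.var v

def argsVars {F : Type} (args : List (Term F)) : Set Var := {v | ∃ t ∈ args, v ∈ Term.vars t}

/-- Ordinary first-order literals over predicate symbols `P`
(`pol = true` for positive literals). -/
structure Lit (F P : Type) where
  pol : Bool
  pred : P
  args : List (Term F)

def Lit.subst {F P : Type} (σ : Subst F) (l : Lit F P) : Lit F P :=
  ⟨l.pol, l.pred, l.args.map (Term.subst σ)⟩

/-- M-literals: `⊤` or a triple `(L, t, S)`. -/
inductive MLit (F P : Type)
  | top : MLit F P
  | lit (pol : Bool) (pred : P) (args : List (Term F)) (S : Set (Subst F)) : MLit F P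

/-- The (common) domain of the substitution set of an M-literal. -/
def MLit.domS {F P : Type} : MLit F P → Set Var
  | .top => ∅
  | .lit _ _ _ S => {v | ∃ σ ∈ S, v ∈ Subst.dom σ}

/-- Side conditions in the definition of M-literals: all substitutions of `S` share a
common domain `D` consisting of abstraction variables of the argument tuple, and
`Vars(t σ) ∩ D = ∅` for all `σ ∈ S`. -/
def MLit.WF {F P : Type} : MLit F P → Prop
  | .top => True
  | .lit _ _ args S =>
      (∀ σ ∈ S, ∀ τ ∈ S, Subst.dom σ = Subst.dom τ) ∧
      (∀ σ ∈ S, ∀ v ∈ Subst.dom σ, Var.isAbs v ∧ v ∈ argsVars args) ∧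
      (∀ σ ∈ S, ∀ v ∈ Subst.dom σ, v ∉ argsVars (args.map (Term.subst σ)))

def MLit.finiteS {F P : Type} : MLit F P → Prop
  | .top => True
  | .lit _ _ _ S => S.Finite

/-- All variables occurring in an M-literal. -/
def MLit.varsIn {F P : Type} : MLit F P → Set Var
  | .top => ∅
  | .lit _ _ args S => argsVars args ∪ {v | ∃ σ ∈ S, v ∈ Subst.vars σ}

/-- Semantics: `⊤` or a clause, a clause being identified with the set of its
literals (which accounts for associativity, commutativity and idempotence of `∨`). -/
inductive NF (F P : Type)
  | tru : NF F P
  | clause : Set (Lit F P) → NF F P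

def MLit.semSet {F P : Type} : MLit F P → Set (Lit F P)
  | .top => ∅
  | .lit b p args S => {l | ∃ σ ∈ S, l = ⟨b, p, args.map (Term.subst σ)⟩}

def MLit.sem {F P : Type} : MLit F P → NF F P
  | .top => .tru
  | .lit b p args S => .clause (MLit.semSet (.lit b p args S))

/-- M-clauses: sets of M-literals. -/
abbrev MClause (F P : Type) := Set (MLit F P)

open Classical in
noncomputable def MClause.sem {F P : Type} (C : MClause F P) : NF F P :=
  if MLit.top ∈ C then .tru else .clause {l | ∃ m ∈ C, l ∈ MLit.semSet m}

/-- Well-formed M-clauses: distinct M-literals have substitution sets with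
disjoint domains. -/
def MClause.WellFormed {F P : Type} (C : MClause F P) : Prop :=
  ∀ l ∈ C, ∀ m ∈ C, l ≠ m → MLit.domS l ∩ MLit.domS m = ∅

def GoodClauseSet {F P : Type} (𝒞 : Set (MClause F P)) : Prop :=
  ∀ C ∈ 𝒞, MClause.WellFormed C ∧ ∀ l ∈ C, MLit.WF l

def FiniteClauseSet {F P : Type} (𝒞 : Set (MClause F P)) : Prop :=
  ∀ C ∈ 𝒞, C.Finite ∧ ∀ l ∈ C, MLit.finiteS l

open Classical in
/-- Application of a substitution to an M-literal: the arguments are instantiated by the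
restriction of `σ` to the variables not in `dom S`, and the substitutions of `S` are
composed with `σ`. -/
noncomputable def MLit.subst {F P : Type} (σ : Subst F) : MLit F P → MLit F P
  | .top => .top
  | .lit b p args S =>
      .lit b p
        (args.map (Term.subst (fun v => if ∃ θ ∈ S, v ∈ Subst.dom θ then Term.var v else σ v)))
        ((fun θ => Subst.compOn θ σ) '' S)

/-- Renamings: injective, mapping ordinary variables to ordinary variables and
abstraction variables to abstraction variables. -/
def VarRenaming (ρ : Var → Var) : Prop :=
  Function.Injective ρ ∧ (∀ n, ∃ m, ρ (Var.ord n) = Var.ord m) ∧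
    (∀ n, ∃ m, ρ (Var.abs n) = Var.abs m)

def renSubst {F : Type} (ρ : Var → Var) : Subst F := fun v => Term.var (ρ v)

open Classical in
/-- Transport of a substitution along a renaming `ρ`. -/
noncomputable def Subst.renameBy {F : Type} (ρ : Var → Var) (σ : Subst F) : Subst F :=
  fun v => if h : ∃ w, ρ w = v then Term.subst (renSubst ρ) (σ h.choose) else Term.var v

/-- Renaming of an M-literal (all variables, including those of `dom S`, are renamed). -/
noncomputable def MLit.rename {F P : Type} (ρ : Var → Var) : MLit F P → MLit F P
  | .top => .top
  | .lit b p args S => .lit b p (args.map (Term.subst (renSubst ρ))) (Subst.renameBy ρ '' S)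

noncomputable def MClause.rename {F P : Type} (ρ : Var → Var) (C : MClause F P) : MClause F P :=
  MLit.rename ρ '' C

def MLit.head {F P : Type} : MLit F P → Option (Bool × P)
  | .top => none
  | .lit b p _ _ => some (b, p)

/-- Bundled normal form. -/
def MClause.BNF {F P : Type} (C : MClause F P) : Prop :=
  (∀ b p args S, MLit.lit b p args S ∈ C → S ≠ ∅) ∧
  (MLit.top ∈ C → C = {MLit.top}) ∧
  (∀ l ∈ C, ∀ m ∈ C, l ≠ m → MLit.head l ≠ MLit.head m)

end MTab
namespace MTab

/-- Pre-tableaux: trees labelled by M-literals. -/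
inductive Tree (F P : Type)
  | node : MLit F P → List (Tree F P) → Tree F P

def Tree.label {F P : Type} : Tree F P → MLit F P
  | .node l _ => l

def Tree.children {F P : Type} : Tree F P → List (Tree F P)
  | .node _ c => c

/-- The subtree of `t` at position `p` (a position is a list of child indices). -/
def Tree.subtreeAt {F P : Type} : List ℕ → Tree F P → Option (Tree F P)
  | [], t => some t
  | i :: p, .node _ cs => (cs[i]?).bind (Tree.subtreeAt p)

def Tree.labelAt {F P : Type} (p : List ℕ) (t : Tree F P) : Option (MLit F P) :=
  (Tree.subtreeAt p t).map Tree.label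

def Tree.IsPos {F P : Type} (t : Tree F P) (p : List ℕ) : Prop :=
  (Tree.subtreeAt p t).isSome

def Tree.IsLeafPos {F P : Type} (t : Tree F P) (p : List ℕ) : Prop :=
  ∃ l, Tree.subtreeAt p t = some (Tree.node l [])

/-- All variables occurring in the labels of a tree. -/
def Tree.varsIn {F P : Type} (t : Tree F P) : Set Var :=
  {v | ∃ p l, Tree.labelAt p t = some l ∧ v ∈ MLit.varsIn l}

noncomputable def Tree.substT {F P : Type} (σ : Subst F) : Tree F P → Tree F P
  | .node l c => .node (MLit.subst σ l) (c.attach.map (fun x => Tree.substT σ x.1))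
  decreasing_by have := List.sizeOf_lt_of_mem x.2; simp only [Tree.node.sizeOf_spec]; omega

/-- Replace the subtree at position `p` by `u`. -/
def Tree.replaceAt {F P : Type} : List ℕ → Tree F P → Tree F P → Tree F P
  | [], u, _ => u
  | i :: p, u, .node l cs =>
      .node l (match cs[i]? with
        | some tj => cs.set i (Tree.replaceAt p u tj)
        | none => cs)

/-- Change the label of the node at position `p` to `m`. -/
def Tree.relabelAt {F P : Type} : List ℕ → MLit F P → Tree F P → Tree F P
  | [], m, .node _ c => .node m c
  | i :: p, m, .node l cs =>
      .node l (match cs[i]? with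
        | some tj => cs.set i (Tree.relabelAt p m tj)
        | none => cs)

/-- Add a new (last) child `u` to the node at position `p`. -/
def Tree.appendChildAt {F P : Type} : List ℕ → Tree F P → Tree F P → Tree F P
  | [], u, .node l c => .node l (c ++ [u])
  | i :: p, u, .node l cs =>
      .node l (match cs[i]? with
        | some tj => cs.set i (Tree.appendChildAt p u tj)
        | none => cs)

/-- Number of nodes of a tree. -/
def Tree.size {F P : Type} : Tree F P → ℕ
  | .node _ c => 1 + ((c.attach.map (fun x => Tree.size x.1)).sum)
  decreasing_by have := List.sizeOf_lt_of_mem x.2; simp only [Tree.node.sizeOf_spec]; omega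

/-- Number of leaves (branches) of a tree. -/
def Tree.leafCount {F P : Type} : Tree F P → ℕ
  | .node _ [] => 1
  | .node _ (t :: ts) => (((t :: ts).attach.map (fun x => Tree.leafCount x.1)).sum)
  decreasing_by have := List.sizeOf_lt_of_mem x.2; simp only [Tree.node.sizeOf_spec]; omega

/-- Height of a tree (number of nodes on a longest branch). -/
def Tree.height {F P : Type} : Tree F P → ℕ
  | .node _ c => 1 + ((c.attach.map (fun x => Tree.height x.1)).foldr max 0)
  decreasing_by have := List.sizeOf_lt_of_mem x.2; simp only [Tree.node.sizeOf_spec]; omega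

/-- `p` is a proper prefix of `q` (i.e. the node at `q` is a proper descendant
of the node at `p`). -/
def ProperPrefix (p q : List ℕ) : Prop := p <+: q ∧ p ≠ q

def singleSubst {F : Type} (x : Var) (s : Term F) : Subst F :=
  fun v => if v = x then s else Term.var v

/-- The Expansion rule. -/
def ExpandStep {F P : Type} (𝒞 : Set (MClause F P)) (T T' : Tree F P) : Prop :=
  ∃ (p : List ℕ) (l : MLit F P) (C : MClause F P) (ρ : Var → Var) (ls : List (MLit F P)),
    Tree.subtreeAt p T = some (Tree.node l []) ∧
    C ∈ 𝒞 ∧ MLit.top ∉ C ∧ VarRenaming ρ ∧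
    ls.Nodup ∧ {m | m ∈ ls} = MClause.rename ρ C ∧
    (∀ m ∈ ls, MLit.varsIn m ∩ Tree.varsIn T = ∅) ∧
    T' = Tree.replaceAt p (Tree.node l (ls.map (fun m => Tree.node m []))) T

/-- The Instantiation rule: an ordinary variable `x` is instantiated by a term `s`,
provided every node whose label contains `x` is a proper descendant of every node
introducing an abstraction variable of `s`. -/
def InstStep {F P : Type} (T T' : Tree F P) : Prop :=
  ∃ (x : ℕ) (s : Term F),
    (∀ (p p' : List ℕ) (l l' : MLit F P),
        Tree.labelAt p T = some l → Tree.labelAt p' T = some l' →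
        Var.ord x ∈ MLit.varsIn l →
        (∃ α, α ∈ MLit.domS l' ∧ α ∈ Term.vars s ∧ Var.isAbs α) →
        ProperPrefix p' p) ∧
    T' = Tree.substT (singleSubst (Var.ord x) s) T

/-- The Separation rule, applied below the node at position `q`, on its `i`-th child `μ`
labelled `(L, t, S)`, with instantiation `θ` (so that `r = t θ`), splitting `S` into
`S1` (witnessed by the choice function `f` assigning to each `σ ∈ S1` the
corresponding `σ'`) and `S2 = S \ S1`. -/
def SepStep {F P : Type} (T : Tree F P) (q : List ℕ) (i : ℕ)
    (b : Bool) (pr : P) (args : List (Term F)) (S : Set (Subst F))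
    (θ : Subst F) (f : Subst F → Subst F) (S1 S2 : Set (Subst F)) (T' : Tree F P) : Prop :=
  ∃ (n μ : Tree F P),
    Tree.subtreeAt q T = some n ∧ n.children ≠ [] ∧
    (n.children)[i]? = some μ ∧ μ.label = MLit.lit b pr args S ∧
    Subst.dom θ = MLit.domS (MLit.lit b pr args S) ∧
    (∀ α, Var.isAbs α → α ∈ argsVars (args.map (Term.subst θ)) →
      α ∉ MLit.domS (MLit.lit b pr args S)) ∧
    S1 = {σ | σ ∈ S ∧ ∃ σ' : Subst F,
            args.map (Term.subst σ) = (args.map (Term.subst θ)).map (Term.subst σ') ∧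
            ∀ v ∈ Subst.dom σ', Var.isAbs v ∧ v ∉ Tree.varsIn T} ∧
    (∀ σ ∈ S1,
        args.map (Term.subst σ) = (args.map (Term.subst θ)).map (Term.subst (f σ)) ∧
        ∀ v ∈ Subst.dom (f σ), Var.isAbs v ∧ v ∉ Tree.varsIn T) ∧
    S1 ≠ ∅ ∧ S2 = S \ S1 ∧
    T' = Tree.appendChildAt q (Tree.node (MLit.lit b pr args S2) [])
          (Tree.relabelAt (q ++ [i]) (MLit.lit b pr (args.map (Term.subst θ)) (f '' S1))
            (Tree.substT θ T))

/-- M-tableaux for a set of M-clauses. -/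
inductive MTableau {F P : Type} (𝒞 : Set (MClause F P)) : Tree F P → Prop
  | init : MTableau 𝒞 (Tree.node MLit.top [])
  | expand {T T' : Tree F P} : MTableau 𝒞 T → ExpandStep 𝒞 T T' → MTableau 𝒞 T'
  | inst {T T' : Tree F P} : MTableau 𝒞 T → InstStep T T' → MTableau 𝒞 T'
  | sep {T T' : Tree F P} : MTableau 𝒞 T →
      (∃ q i b pr args S θ f S1 S2, SepStep T q i b pr args S θ f S1 S2 T') →
      MTableau 𝒞 T'

/-- `false` literals: M-literals with an empty substitution set. -/
def MLit.isFalse {F P : Type} : MLit F P → Prop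
  | .top => False
  | .lit _ _ _ S => S = ∅

/-- Closedness of the branch ending at leaf position `lp`. -/
def ClosedBranch {F P : Type} (T : Tree F P) (lp : List ℕ) : Prop :=
  (∃ q l, q <+: lp ∧ Tree.labelAt q T = some l ∧ MLit.isFalse l) ∨
  (∃ q1 q2 pr args S1 S2, q1 <+: lp ∧ q2 <+: lp ∧
    Tree.labelAt q1 T = some (MLit.lit true pr args S1) ∧
    Tree.labelAt q2 T = some (MLit.lit false pr args S2))

def ClosedTree {F P : Type} (T : Tree F P) : Prop :=
  ∀ p, Tree.IsLeafPos T p → ClosedBranch T p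

/-- First-order interpretations. -/
structure Interp (F P : Type) where
  carrier : Type
  nonempty : Nonempty carrier
  fI : F → List carrier → carrier
  pI : P → List carrier → Prop

def Term.eval {F P : Type} (I : Interp F P) (ν : Var → I.carrier) : Term F → I.carrier
  | .var v => ν v
  | .fn f ts => I.fI f (ts.attach.map (fun x => Term.eval I ν x.1))
  decreasing_by have := List.sizeOf_lt_of_mem x.2; simp only [Term.fn.sizeOf_spec]; omega

def Lit.holds {F P : Type} (I : Interp F P) (ν : Var → I.carrier) (l : Lit F P) : Prop :=
  if l.pol then I.pI l.pred (l.args.map (Term.eval I ν))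
  else ¬ I.pI l.pred (l.args.map (Term.eval I ν))

/-- Satisfaction of a (universally closed) clause, or of `true`. -/
def Interp.satNF {F P : Type} (I : Interp F P) : NF F P → Prop
  | .tru => True
  | .clause c => ∀ ν : Var → I.carrier, ∃ l ∈ c, Lit.holds I ν l

/-- `⟦𝒞⟧` is unsatisfiable. -/
def Unsat {F P : Type} (𝒞 : Set (MClause F P)) : Prop :=
  ¬ ∃ I : Interp F P, ∀ C ∈ 𝒞, I.satNF (MClause.sem C)

/-- Disjunction of `NF` formulas. -/
def NF.or {F P : Type} : NF F P → NF F P → NF F P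
  | .tru, _ => .tru
  | .clause _, .tru => .tru
  | .clause s, .clause s' => .clause (s ∪ s')

def NF.disj {F P : Type} (l : List (NF F P)) : NF F P := l.foldr NF.or (NF.clause ∅)

/-- Applying a substitution to an `NF` formula (instances of a formula). -/
def NF.substApp {F P : Type} (σ : Subst F) : NF F P → NF F P
  | .tru => .tru
  | .clause s => .clause (Lit.subst σ '' s)

end MTab
namespace MTab

/-!
Separation applies `θ` to the whole tableau, relabels `μ` and adds one new leaf `(L, t, S2)`
below `n`. In an M-tableau distinct nodes have disjoint substitution domains (each rule preserves
this), and `dom θ = dom S`, so `θ` instantiates the term tuples of all nodes other than `μ`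
uniformly, while `μ` itself gets the instance `r = tθ`. Hence complementary pairs stay
complementary, and false nodes stay false (`μ` is not one, as `S ⊇ S1 ≠ ∅`): every old branch
stays closed, and the only branch that may be open is the one through the new leaf.
-/

section

variable {F P : Type}

theorem Subst.dom_compOn_subset (σ τ : Subst F) : (σ.compOn τ).dom ⊆ σ.dom := by
  intro v hv
  by_contra hσ
  exact hv (by simp [Subst.compOn, hσ])

theorem Subst.dom_renameBy_subset (ρ : Var → Var) (σ : Subst F) :
    (σ.renameBy ρ).dom ⊆ ρ '' σ.dom := by
  intro v hv
  simp only [Subst.dom, Subst.renameBy, Set.mem_ofPred_eq] at hv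
  split_ifs at hv with h
  · refine ⟨h.choose, fun hc => hv ?_, h.choose_spec⟩
    rw [hc, Term.subst, renSubst, h.choose_spec]
  · exact absurd rfl hv

namespace MLit

theorem domS_subst_subset (σ : Subst F) (l : MLit F P) : (l.subst σ).domS ⊆ l.domS := by
  cases l with
  | top => exact subset_rfl
  | lit b p a S =>
    rintro v ⟨_, ⟨τ, hτ, rfl⟩, hv⟩
    exact ⟨τ, hτ, Subst.dom_compOn_subset τ σ hv⟩

theorem domS_rename_subset (ρ : Var → Var) (l : MLit F P) :
    (l.rename ρ).domS ⊆ ρ '' l.domS := by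
  cases l with
  | top => simp [rename, domS]
  | lit b p a S =>
    rintro v ⟨_, ⟨τ, hτ, rfl⟩, hv⟩
    obtain ⟨w, hw, rfl⟩ := Subst.dom_renameBy_subset ρ τ hv
    exact ⟨w, ⟨τ, hτ, hw⟩, rfl⟩

theorem domS_subset_varsIn (l : MLit F P) : l.domS ⊆ l.varsIn := by
  cases l with
  | top => exact subset_rfl
  | lit b p a S =>
    rintro v ⟨σ, hσ, hv⟩
    exact Or.inr ⟨σ, hσ, Or.inl hv⟩

theorem domS_lit_mono (b : Bool) (p : P) (a : List (Term F)) {S S' : Set (Subst F)}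
    (h : S' ⊆ S) : (lit b p a S').domS ⊆ (lit b p a S).domS :=
  fun _ ⟨σ, hσ, hv⟩ => ⟨σ, h hσ, hv⟩

theorem subst_lit_of_disjoint {θ : Subst F} {b : Bool} {p : P} {a : List (Term F)}
    {S : Set (Subst F)} (h : Disjoint (lit b p a S).domS θ.dom) :
    (lit b p a S).subst θ = lit b p (a.map (Term.subst θ)) ((fun τ => τ.compOn θ) '' S) := by
  classical
  have hθ : (fun v => if ∃ τ ∈ S, v ∈ τ.dom then Term.var v else θ v) = θ := by
    funext v
    split_ifs with hv
    · have : v ∉ θ.dom := h.notMem_of_mem_left hv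
      simp only [Subst.dom, Set.mem_ofPred_eq, not_not] at this
      exact this.symm
    · rfl
  simp only [MLit.subst, hθ]

end MLit

theorem MClause.WellFormed.rename {C : MClause F P} (hC : C.WellFormed) {ρ : Var → Var}
    (hρ : Function.Injective ρ) : (C.rename ρ).WellFormed := by
  rintro _ ⟨l, hl, rfl⟩ _ ⟨m, hm, rfl⟩ hne
  have hlm : Disjoint l.domS m.domS :=
    Set.disjoint_iff_inter_eq_empty.mpr (hC l hl m hm fun h => hne (h ▸ rfl))
  exact Set.disjoint_iff_inter_eq_empty.mp <|
    ((Set.disjoint_image_of_injective hρ hlm).mono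
      (l.domS_rename_subset ρ) (m.domS_rename_subset ρ))

namespace Tree

theorem substT_node (σ : Subst F) (l : MLit F P) (c : List (Tree F P)) :
    substT σ (node l c) = node (MLit.subst σ l) (c.map (substT σ)) := by
  rw [substT]
  simp

theorem subtreeAt_append (p r : List ℕ) (T : Tree F P) :
    subtreeAt (p ++ r) T = (subtreeAt p T).bind (subtreeAt r) := by
  induction p generalizing T with
  | nil => rfl
  | cons i p ih =>
    obtain ⟨l, cs⟩ := T
    simp only [List.cons_append, subtreeAt]
    cases cs[i]? <;> simp [ih]

theorem subtreeAt_substT (σ : Subst F) (p : List ℕ) (T : Tree F P) :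
    subtreeAt p (substT σ T) = (subtreeAt p T).map (substT σ) := by
  induction p generalizing T with
  | nil => rfl
  | cons i p ih =>
    obtain ⟨l, cs⟩ := T
    simp only [substT_node, subtreeAt, List.getElem?_map]
    cases cs[i]? <;> simp [ih]

def arityAt (r : List ℕ) (T : Tree F P) : Option ℕ :=
  (subtreeAt r T).map fun s => s.children.length

theorem isLeafPos_iff_arityAt {T : Tree F P} {r : List ℕ} :
    IsLeafPos T r ↔ arityAt r T = some 0 := by
  simp only [IsLeafPos, arityAt, Option.map_eq_some_iff]
  constructor
  · rintro ⟨l, hl⟩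
    exact ⟨_, hl, rfl⟩
  · rintro ⟨⟨l, c⟩, hs, hc⟩
    rw [children, List.length_eq_zero_iff] at hc
    exact ⟨l, hc ▸ hs⟩

theorem labelAt_substT (σ : Subst F) (r : List ℕ) (T : Tree F P) :
    labelAt r (substT σ T) = (labelAt r T).map (MLit.subst σ) := by
  simp only [labelAt, subtreeAt_substT, Option.map_map]
  congr 1
  funext ⟨l, c⟩
  simp [substT_node, label]

theorem arityAt_substT (σ : Subst F) (r : List ℕ) (T : Tree F P) :
    arityAt r (substT σ T) = arityAt r T := by
  simp only [arityAt, subtreeAt_substT, Option.map_map]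
  congr 1
  funext ⟨l, c⟩
  simp [substT_node, children]

/-- `g` may not see the children themselves: the ancestors of `p` get a new list of children. -/
theorem map_subtreeAt_replaceAt {α : Type} (g : Tree F P → α)
    (hg : ∀ l (c c' : List (Tree F P)), c.length = c'.length → g (node l c) = g (node l c'))
    {p : List ℕ} {T : Tree F P} (hp : (subtreeAt p T).isSome) (u : Tree F P) (r : List ℕ) :
    (subtreeAt r (replaceAt p u T)).map g =
      if p <+: r then (subtreeAt (r.drop p.length) u).map g else (subtreeAt r T).map g := by
  induction p generalizing T r with
  | nil => simp [replaceAt]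
  | cons i p ih =>
    obtain ⟨l, cs⟩ := T
    simp only [subtreeAt] at hp
    obtain ⟨t, ht⟩ := Option.isSome_iff_exists.mp (Option.isSome_of_isSome_bind hp)
    rw [ht, Option.bind_some] at hp
    have hi : i < cs.length := (List.getElem?_eq_some_iff.mp ht).1
    cases r with
    | nil => simp [replaceAt, ht, subtreeAt, hg l _ cs]
    | cons j r =>
      simp only [replaceAt, ht, subtreeAt, List.cons_prefix_cons, List.length_cons,
        List.drop_succ_cons]
      by_cases hji : j = i
      · subst hji
        simp [List.getElem?_set_self hi, ht, ih hp]
      · simp [List.getElem?_set_ne (Ne.symm hji), Ne.symm hji]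


theorem relabelAt_eq_replaceAt (m : MLit F P) {p : List ℕ} {T : Tree F P} {l : MLit F P}
    {c : List (Tree F P)} (h : subtreeAt p T = some (node l c)) :
    relabelAt p m T = replaceAt p (node m c) T := by
  induction p generalizing T with
  | nil => cases h; rfl
  | cons i p ih =>
    obtain ⟨l', cs⟩ := T
    simp only [subtreeAt] at h
    obtain ⟨t, ht, hpt⟩ := Option.bind_eq_some_iff.mp h
    simp [relabelAt, replaceAt, ht, ih hpt]

theorem appendChildAt_eq_replaceAt (u : Tree F P) {p : List ℕ} {T : Tree F P} {l : MLit F P}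
    {c : List (Tree F P)} (h : subtreeAt p T = some (node l c)) :
    appendChildAt p u T = replaceAt p (node l (c ++ [u])) T := by
  induction p generalizing T with
  | nil => cases h; rfl
  | cons i p ih =>
    obtain ⟨l', cs⟩ := T
    simp only [subtreeAt] at h
    obtain ⟨t, ht, hpt⟩ := Option.bind_eq_some_iff.mp h
    simp [appendChildAt, replaceAt, ht, ih hpt]

theorem labelAt_replaceAt {p : List ℕ} {T : Tree F P} (hp : (subtreeAt p T).isSome)
    (u : Tree F P) (r : List ℕ) :
    labelAt r (replaceAt p u T) =
      if p <+: r then labelAt (r.drop p.length) u else labelAt r T :=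
  map_subtreeAt_replaceAt label (fun _ _ _ _ => rfl) hp u r

theorem arityAt_replaceAt {p : List ℕ} {T : Tree F P} (hp : (subtreeAt p T).isSome)
    (u : Tree F P) (r : List ℕ) :
    arityAt r (replaceAt p u T) =
      if p <+: r then arityAt (r.drop p.length) u else arityAt r T :=
  map_subtreeAt_replaceAt (fun s => s.children.length) (fun _ _ _ h => h) hp u r

theorem labelAt_relabelAt (m : MLit F P) {p : List ℕ} {T : Tree F P}
    (hp : (subtreeAt p T).isSome) (r : List ℕ) :
    labelAt r (relabelAt p m T) = if r = p then some m else labelAt r T := by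
  obtain ⟨⟨l, c⟩, h⟩ := Option.isSome_iff_exists.mp hp
  rw [relabelAt_eq_replaceAt m h, labelAt_replaceAt hp]
  split_ifs with hpr hrp hrp
  · simp [hrp, labelAt, subtreeAt, label]
  · obtain ⟨_ | ⟨j, s⟩, rfl⟩ := hpr
    · simp at hrp
    · simp [labelAt, subtreeAt_append, h, subtreeAt]
  · exact absurd (hrp ▸ List.prefix_refl p) hpr
  · rfl

theorem arityAt_relabelAt (m : MLit F P) {p : List ℕ} {T : Tree F P}
    (hp : (subtreeAt p T).isSome) (r : List ℕ) :
    arityAt r (relabelAt p m T) = arityAt r T := by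
  obtain ⟨⟨l, c⟩, h⟩ := Option.isSome_iff_exists.mp hp
  rw [relabelAt_eq_replaceAt m h, arityAt_replaceAt hp]
  split_ifs with hpr
  · obtain ⟨_ | ⟨j, s⟩, rfl⟩ := hpr <;>
      simp [arityAt, subtreeAt_append, h, subtreeAt, children]
  · rfl


theorem map_subtreeAt_appendChildAt {α : Type} (g : Tree F P → α)
    (hg : ∀ l (c c' : List (Tree F P)), c.length = c'.length → g (node l c) = g (node l c'))
    (u : Tree F P) {p : List ℕ} {T : Tree F P} {l : MLit F P} {c : List (Tree F P)}
    (h : subtreeAt p T = some (node l c)) (r : List ℕ) :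
    (subtreeAt r (appendChildAt p u T)).map g =
      if p ++ [c.length] <+: r then (subtreeAt (r.drop (p.length + 1)) u).map g
      else if r = p then some (g (node l (c ++ [u]))) else (subtreeAt r T).map g := by
  rw [appendChildAt_eq_replaceAt u h, map_subtreeAt_replaceAt g hg (by simp [h])]
  by_cases hpr : p <+: r
  · obtain ⟨_ | ⟨j, s⟩, rfl⟩ := hpr
    · have : ¬ p ++ [c.length] <+: p := fun h' => by simpa using h'.length_le
      simp [subtreeAt, this]
    · have hdrop : (p ++ j :: s).drop (p.length + 1) = s := by simp
      simp only [List.prefix_append_right_inj, List.cons_prefix_cons, List.nil_prefix, and_true,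
        List.drop_left, hdrop, subtreeAt_append, h, Option.bind_some, subtreeAt]
      rcases lt_trichotomy j c.length with hj | rfl | hj
      · simp [List.getElem?_append_left hj, hj.ne']
      · simp
      · have hu : (c ++ [u])[j]? = none := List.getElem?_eq_none (by simpa using hj)
        simp [hu, List.getElem?_eq_none hj.le, hj.ne]
  · have hpr' : ¬ p ++ [c.length] <+: r := fun h' => hpr ((List.prefix_append _ _).trans h')
    have hrp : r ≠ p := by rintro rfl; exact hpr (List.prefix_refl r)
    simp [hpr, hpr', hrp]


theorem exists_subtreeAt_of_arityAt {p : List ℕ} {T : Tree F P} {k : ℕ}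
    (h : arityAt p T = some k) : ∃ l c, subtreeAt p T = some (node l c) ∧ c.length = k := by
  obtain ⟨⟨l, c⟩, hs, hc⟩ := Option.map_eq_some_iff.mp h
  exact ⟨l, c, hs, hc⟩

theorem labelAt_appendChildAt (u : Tree F P) {p : List ℕ} {T : Tree F P} {k : ℕ}
    (h : arityAt p T = some k) (r : List ℕ) :
    labelAt r (appendChildAt p u T) =
      if p ++ [k] <+: r then labelAt (r.drop (p.length + 1)) u else labelAt r T := by
  obtain ⟨l, c, hs, rfl⟩ := exists_subtreeAt_of_arityAt h
  rw [labelAt, map_subtreeAt_appendChildAt label (fun _ _ _ _ => rfl) u hs]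
  split_ifs with _ hrp
  · rfl
  · simp [hrp, labelAt, hs, label]
  · rfl

theorem arityAt_appendChildAt (u : Tree F P) {p : List ℕ} {T : Tree F P} {k : ℕ}
    (h : arityAt p T = some k) (r : List ℕ) :
    arityAt r (appendChildAt p u T) =
      if p ++ [k] <+: r then arityAt (r.drop (p.length + 1)) u
      else if r = p then some (k + 1) else arityAt r T := by
  obtain ⟨l, c, hs, rfl⟩ := exists_subtreeAt_of_arityAt h
  rw [arityAt, map_subtreeAt_appendChildAt _ (fun _ _ _ h => h) u hs]
  simp [arityAt, children]

theorem labelAt_eq_none_of_arityAt {p : List ℕ} {T : Tree F P} {k : ℕ}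
    (h : arityAt p T = some k) {r : List ℕ} (hr : p ++ [k] <+: r) : labelAt r T = none := by
  obtain ⟨l, c, hs, rfl⟩ := exists_subtreeAt_of_arityAt h
  obtain ⟨t, rfl⟩ := hr
  simp [labelAt, subtreeAt_append, hs, subtreeAt]

theorem isSome_subtreeAt_of_labelAt {T : Tree F P} {r : List ℕ} {l : MLit F P}
    (h : labelAt r T = some l) : (subtreeAt r T).isSome := by
  rw [← Option.isSome_map (f := label)]
  exact Option.isSome_iff_exists.mpr ⟨l, h⟩

theorem labelAt_leaf {t : List ℕ} {l x : MLit F P} (h : labelAt t (node l []) = some x) :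
    t = [] ∧ x = l := by
  cases t with
  | nil => simp_all [labelAt, subtreeAt, label]
  | cons j s => simp [labelAt, subtreeAt] at h

theorem labelAt_node_leaves {t : List ℕ} {l x : MLit F P} {ls : List (MLit F P)}
    (h : labelAt t (node l (ls.map fun m => node m [])) = some x) :
    (t = [] ∧ x = l) ∨ ∃ j, ∃ hj : j < ls.length, t = [j] ∧ x = ls[j] := by
  match t with
  | [] => simp_all [labelAt, subtreeAt, label]
  | j :: s =>
    rcases lt_or_ge j ls.length with hj | hj
    · simp only [labelAt, subtreeAt, List.getElem?_map, List.getElem?_eq_getElem hj,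
        Option.map_some, Option.bind_some] at h
      obtain ⟨rfl, rfl⟩ := labelAt_leaf h
      exact Or.inr ⟨j, hj, rfl, rfl⟩
    · simp [labelAt, subtreeAt, List.getElem?_eq_none hj] at h

section Separation

variable (θ : Subst F) (m : MLit F P) {T : Tree F P} {q : List ℕ} {k : ℕ}

theorem labelAt_appendChildAt_relabelAt_substT (u : Tree F P) (hk : arityAt q T = some k)
    {i : ℕ} (hi : (subtreeAt (q ++ [i]) T).isSome) (r : List ℕ) :
    labelAt r (appendChildAt q u (relabelAt (q ++ [i]) m (substT θ T))) =
      if q ++ [k] <+: r then labelAt (r.drop (q.length + 1)) u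
      else if r = q ++ [i] then some m else (labelAt r T).map (MLit.subst θ) := by
  have hi' : (subtreeAt (q ++ [i]) (substT θ T)).isSome := by simpa [subtreeAt_substT] using hi
  have hk' : arityAt q (relabelAt (q ++ [i]) m (substT θ T)) = some k := by
    rw [arityAt_relabelAt m hi', arityAt_substT, hk]
  rw [labelAt_appendChildAt u hk', labelAt_relabelAt m hi', labelAt_substT]

theorem isLeafPos_appendChildAt_relabelAt_substT (l : MLit F P) (hk : arityAt q T = some k)
    {p : List ℕ} (hp : (subtreeAt p T).isSome) {r : List ℕ}
    (hr : IsLeafPos (appendChildAt q (node l []) (relabelAt p m (substT θ T))) r) :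
    r = q ++ [k] ∨ IsLeafPos T r := by
  have hp' : (subtreeAt p (substT θ T)).isSome := by simpa [subtreeAt_substT] using hp
  have hk' : arityAt q (relabelAt p m (substT θ T)) = some k := by
    rw [arityAt_relabelAt m hp', arityAt_substT, hk]
  rw [isLeafPos_iff_arityAt, arityAt_appendChildAt _ hk', arityAt_relabelAt m hp',
    arityAt_substT] at hr
  split_ifs at hr with hqr
  · obtain ⟨_ | ⟨j, s⟩, rfl⟩ := hqr
    · exact Or.inl (List.append_nil _)
    · simp [arityAt, subtreeAt] at hr
  · simp at hr
  · exact Or.inr (isLeafPos_iff_arityAt.mpr hr)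

end Separation

theorem domS_subset_varsIn {T : Tree F P} {r : List ℕ} {l : MLit F P}
    (h : labelAt r T = some l) : l.domS ⊆ T.varsIn :=
  fun _ hv => ⟨r, l, h, l.domS_subset_varsIn hv⟩

def DisjointDomains (T : Tree F P) : Prop :=
  ∀ p₁ p₂ l₁ l₂, labelAt p₁ T = some l₁ → labelAt p₂ T = some l₂ → p₁ ≠ p₂ →
    Disjoint (MLit.domS l₁) (MLit.domS l₂)

theorem DisjointDomains.substT {T : Tree F P} (hT : T.DisjointDomains) (σ : Subst F) :
    (substT σ T).DisjointDomains := by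
  intro p₁ p₂ l₁ l₂ h₁ h₂ hne
  rw [labelAt_substT] at h₁ h₂
  obtain ⟨m₁, hm₁, rfl⟩ := Option.map_eq_some_iff.mp h₁
  obtain ⟨m₂, hm₂, rfl⟩ := Option.map_eq_some_iff.mp h₂
  exact (hT _ _ _ _ hm₁ hm₂ hne).mono (m₁.domS_subst_subset σ) (m₂.domS_subst_subset σ)

theorem DisjointDomains.expandStep {𝒞 : Set (MClause F P)} (h𝒞 : ∀ C ∈ 𝒞, C.WellFormed)
    {T T' : Tree F P} (hT : T.DisjointDomains) (h : ExpandStep 𝒞 T T') : T'.DisjointDomains := by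
  obtain ⟨p, l, C, ρ, ls, hp, hC, -, hρ, hnodup, hls, hfresh, rfl⟩ := h
  have hclass : ∀ r x, labelAt r (replaceAt p (node l (ls.map fun m => node m [])) T) = some x →
      labelAt r T = some x ∨ ∃ j, ∃ hj : j < ls.length, r = p ++ [j] ∧ x = ls[j] := by
    intro r x hr
    rw [labelAt_replaceAt (by simp [hp])] at hr
    split_ifs at hr with hpr
    · obtain ⟨t, rfl⟩ := hpr
      rw [List.drop_left] at hr
      rcases labelAt_node_leaves hr with ⟨rfl, rfl⟩ | ⟨j, hj, rfl, rfl⟩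
      · simp [labelAt, hp, label]
      · exact Or.inr ⟨j, hj, rfl, rfl⟩
    · exact Or.inl hr
  have hnew : ∀ j (hj : j < ls.length), Disjoint (MLit.domS ls[j]) T.varsIn := fun j hj =>
    (Set.disjoint_iff_inter_eq_empty.mpr (hfresh _ (List.getElem_mem hj))).mono_left
      (MLit.domS_subset_varsIn _)
  have hmem : ∀ j (hj : j < ls.length), ls[j] ∈ C.rename ρ := fun j hj =>
    hls ▸ List.getElem_mem hj
  intro p₁ p₂ l₁ l₂ h₁ h₂ hne
  rcases hclass _ _ h₁ with h₁ | ⟨j₁, hj₁, rfl, rfl⟩ <;>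
    rcases hclass _ _ h₂ with h₂ | ⟨j₂, hj₂, rfl, rfl⟩
  · exact hT _ _ _ _ h₁ h₂ hne
  · exact (hnew j₂ hj₂).symm.mono_left (domS_subset_varsIn h₁)
  · exact (hnew j₁ hj₁).mono_right (domS_subset_varsIn h₂)
  · have hj : j₁ ≠ j₂ := fun h => hne (h ▸ rfl)
    exact Set.disjoint_iff_inter_eq_empty.mpr <| ((h𝒞 C hC).rename hρ.1) _ (hmem j₁ hj₁) _
      (hmem j₂ hj₂) (hnodup.getElem_inj_iff.not.mpr hj)

end Tree

namespace SepStep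

variable {T T' : Tree F P} {q : List ℕ} {i : ℕ} {b : Bool} {pr : P} {args : List (Term F)}
  {S : Set (Subst F)} {θ : Subst F} {f : Subst F → Subst F} {S1 S2 : Set (Subst F)}

theorem labelAt_child (hsep : SepStep T q i b pr args S θ f S1 S2 T') :
    T.labelAt (q ++ [i]) = some (MLit.lit b pr args S) := by
  obtain ⟨⟨l, c⟩, μ, hn, -, hμ, hlabel, -⟩ := hsep
  simp_all [Tree.labelAt, Tree.subtreeAt_append, Tree.subtreeAt, Tree.children]

theorem exists_arityAt (hsep : SepStep T q i b pr args S θ f S1 S2 T') :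
    ∃ k, i < k ∧ T.arityAt q = some k := by
  obtain ⟨n, μ, hn, -, hμ, -⟩ := hsep
  exact ⟨_, (List.getElem?_eq_some_iff.mp hμ).1, by simp [Tree.arityAt, hn]⟩

theorem nonempty (hsep : SepStep T q i b pr args S θ f S1 S2 T') : S.Nonempty := by
  obtain ⟨-, -, -, -, -, -, -, -, rfl, -, hS1, -⟩ := hsep
  obtain ⟨σ, hσ, -⟩ := Set.nonempty_iff_ne_empty.mpr hS1
  exact ⟨σ, hσ⟩

theorem labelAt_eq (hsep : SepStep T q i b pr args S θ f S1 S2 T') {k : ℕ}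
    (hk : T.arityAt q = some k) (r : List ℕ) :
    T'.labelAt r =
      if q ++ [k] <+: r then (Tree.node (MLit.lit b pr args S2) []).labelAt (r.drop (q.length + 1))
      else if r = q ++ [i] then some (MLit.lit b pr (args.map (Term.subst θ)) (f '' S1))
      else (T.labelAt r).map (MLit.subst θ) := by
  have hi := Tree.isSome_subtreeAt_of_labelAt hsep.labelAt_child
  obtain ⟨-, -, -, -, -, -, -, -, -, -, -, -, rfl⟩ := hsep
  exact Tree.labelAt_appendChildAt_relabelAt_substT θ _ _ hk hi r

theorem exists_newChild (hsep : SepStep T q i b pr args S θ f S1 S2 T') :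
    ∃ k, T'.labelAt (q ++ [k]) = some (MLit.lit b pr args S2) ∧
      ∀ lp, T'.IsLeafPos lp → lp = q ++ [k] ∨ T.IsLeafPos lp := by
  obtain ⟨k, -, hk⟩ := hsep.exists_arityAt
  have hi := Tree.isSome_subtreeAt_of_labelAt hsep.labelAt_child
  refine ⟨k, by rw [hsep.labelAt_eq hk]; simp [Tree.labelAt, Tree.subtreeAt, Tree.label], ?_⟩
  obtain ⟨-, -, -, -, -, -, -, -, -, -, -, -, rfl⟩ := hsep
  exact fun lp => Tree.isLeafPos_appendChildAt_relabelAt_substT θ _ _ hk hi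

/-- Each node of `T'` is either `μ`, now with fresh domains, or inherits its domains from a node
of `T`: the new leaf `(L, t, S2)` from `μ`, every other node from itself. -/
theorem domS_labelAt (hsep : SepStep T q i b pr args S θ f S1 S2 T') {k : ℕ}
    (hk : T.arityAt q = some k) (hik : i < k) {r : List ℕ} {x : MLit F P}
    (hr : T'.labelAt r = some x) :
    (r = q ++ [i] ∧ Disjoint x.domS T.varsIn) ∨
      (r ≠ q ++ [i] ∧ ∃ l, T.labelAt (if r = q ++ [k] then q ++ [i] else r) = some l ∧
        x.domS ⊆ l.domS) := by
  have hμ := hsep.labelAt_child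
  rw [hsep.labelAt_eq hk] at hr
  obtain ⟨-, -, -, -, -, -, -, -, -, hf, -, hS2, -⟩ := hsep
  split_ifs at hr with hpre hri
  · obtain ⟨t, rfl⟩ := hpre
    obtain ⟨rfl, rfl⟩ := Tree.labelAt_leaf (by simpa using hr)
    refine Or.inr ⟨by simpa using hik.ne', MLit.lit b pr args S, by simp [hμ], ?_⟩
    exact MLit.domS_lit_mono _ _ _ (hS2 ▸ Set.sdiff_subset)
  · cases hr
    refine Or.inl ⟨hri, Set.disjoint_left.mpr ?_⟩
    rintro v ⟨_, ⟨σ, hσ, rfl⟩, hv⟩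
    exact ((hf σ hσ).2 v hv).2
  · obtain ⟨l, hl, rfl⟩ := Option.map_eq_some_iff.mp hr
    have hrk : r ≠ q ++ [k] := fun h => hpre (h ▸ List.prefix_refl _)
    exact Or.inr ⟨hri, l, by simp [hrk, hl], l.domS_subst_subset θ⟩

theorem disjointDomains (hsep : SepStep T q i b pr args S θ f S1 S2 T')
    (hT : T.DisjointDomains) : T'.DisjointDomains := by
  obtain ⟨k, hik, hk⟩ := hsep.exists_arityAt
  have horigin : ∀ r₁ r₂ : List ℕ, r₁ ≠ q ++ [i] → r₂ ≠ q ++ [i] → r₁ ≠ r₂ →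
      (if r₁ = q ++ [k] then q ++ [i] else r₁) ≠ (if r₂ = q ++ [k] then q ++ [i] else r₂) := by
    intro r₁ r₂ h₁ h₂ hne
    split_ifs <;> grind
  intro r₁ r₂ x₁ x₂ h₁ h₂ hne
  rcases hsep.domS_labelAt hk hik h₁ with ⟨rfl, hx₁⟩ | ⟨hr₁, l₁, hl₁, hx₁⟩ <;>
    rcases hsep.domS_labelAt hk hik h₂ with ⟨rfl, hx₂⟩ | ⟨hr₂, l₂, hl₂, hx₂⟩
  · exact absurd rfl hne
  · exact hx₁.mono_right (hx₂.trans (Tree.domS_subset_varsIn hl₂))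
  · exact (hx₂.mono_right (hx₁.trans (Tree.domS_subset_varsIn hl₁))).symm
  · exact (hT _ _ _ _ hl₁ hl₂ (horigin _ _ hr₁ hr₂ hne)).mono hx₁ hx₂

/-- Since `dom θ = dom S` is disjoint from the domains of all other nodes, `θ` acts on each of
them as plain instantiation of its term tuple. -/
theorem labelAt_lit (hsep : SepStep T q i b pr args S θ f S1 S2 T') (hT : T.DisjointDomains)
    {r : List ℕ} {b' : Bool} {p' : P} {a' : List (Term F)} {S' : Set (Subst F)}
    (hr : T.labelAt r = some (MLit.lit b' p' a' S')) :
    ∃ S'', T'.labelAt r = some (MLit.lit b' p' (a'.map (Term.subst θ)) S'') ∧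
      (S' = ∅ → S'' = ∅) := by
  obtain ⟨k, -, hk⟩ := hsep.exists_arityAt
  have hμ := hsep.labelAt_child
  have hS := hsep.nonempty
  rw [hsep.labelAt_eq hk, if_neg fun h => by simp [Tree.labelAt_eq_none_of_arityAt hk h] at hr]
  obtain ⟨-, -, -, -, -, -, hdom, -⟩ := hsep
  split_ifs with hri
  · subst hri
    rw [hμ] at hr
    cases hr
    exact ⟨_, rfl, fun h => absurd h hS.ne_empty⟩
  · have hdisj := hT _ _ _ _ hr hμ hri
    rw [← hdom] at hdisj
    exact ⟨_, by rw [hr, Option.map_some, MLit.subst_lit_of_disjoint hdisj], fun h => by simp [h]⟩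

theorem closedBranch (hsep : SepStep T q i b pr args S θ f S1 S2 T') (hT : T.DisjointDomains)
    {lp : List ℕ} (h : ClosedBranch T lp) : ClosedBranch T' lp := by
  rcases h with ⟨r, _ | ⟨b', p', a', S'⟩, hr, hl, hfalse⟩ |
    ⟨r₁, r₂, p', a', S₁, S₂, h₁, h₂, hl₁, hl₂⟩
  · exact hfalse.elim
  · obtain ⟨S'', hl', hS''⟩ := hsep.labelAt_lit hT hl
    exact Or.inl ⟨r, _, hr, hl', hS'' hfalse⟩
  · obtain ⟨_, hl₁', -⟩ := hsep.labelAt_lit hT hl₁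
    obtain ⟨_, hl₂', -⟩ := hsep.labelAt_lit hT hl₂
    exact Or.inr ⟨r₁, r₂, p', _, _, _, h₁, h₂, hl₁', hl₂'⟩

end SepStep

theorem MTableau.disjointDomains {𝒞 : Set (MClause F P)} (h𝒞 : ∀ C ∈ 𝒞, C.WellFormed)
    {T : Tree F P} (hT : MTableau 𝒞 T) : T.DisjointDomains := by
  induction hT with
  | init =>
    intro p₁ p₂ l₁ l₂ h₁ h₂ hne
    exact absurd ((Tree.labelAt_leaf h₁).1.trans (Tree.labelAt_leaf h₂).1.symm) hne
  | expand _ hstep ih => exact ih.expandStep h𝒞 hstep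
  | inst _ hstep ih =>
    obtain ⟨x, s, -, rfl⟩ := hstep
    exact ih.substT _
  | sep _ hstep ih =>
    obtain ⟨q, i, b, pr, args, S, θ, f, S1, S2, hsep⟩ := hstep
    exact hsep.disjointDomains ih

end

/-- if `T'` is obtained from a closed M-tableau `T` by one application of
the Separation rule (producing the new child labelled `(L, t, S2)`), then at most one
branch of `T'` is not closed, any non-closed branch contains the node labelled
`(L, t, S2)`, and if `S2 = ∅` then `T'` is closed. -/
theorem separation_preserves_closedness {F P : Type} (𝒞 : Set (MClause F P))
    (h𝒞 : GoodClauseSet 𝒞) (T : Tree F P) (hT : MTableau 𝒞 T)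
    (hclosed : ClosedTree T)
    (q : List ℕ) (i : ℕ) (b : Bool) (pr : P) (args : List (Term F))
    (S : Set (Subst F)) (θ : Subst F) (f : Subst F → Subst F)
    (S1 S2 : Set (Subst F)) (T' : Tree F P)
    (hsep : SepStep T q i b pr args S θ f S1 S2 T') :
    (∀ lp, Tree.IsLeafPos T' lp → ¬ ClosedBranch T' lp →
       ∃ r, r <+: lp ∧ Tree.labelAt r T' = some (MLit.lit b pr args S2)) ∧
    (∀ lp lp', Tree.IsLeafPos T' lp → Tree.IsLeafPos T' lp' →
       ¬ ClosedBranch T' lp → ¬ ClosedBranch T' lp' → lp = lp') ∧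
    (S2 = ∅ → ClosedTree T') := by
  have hdisj := hT.disjointDomains fun C hC => (h𝒞 C hC).1
  obtain ⟨k, hnew, hleaf⟩ := hsep.exists_newChild
  have hopen : ∀ lp, T'.IsLeafPos lp → ¬ ClosedBranch T' lp → lp = q ++ [k] :=
    fun lp hlp hnc => (hleaf lp hlp).resolve_right fun h =>
      hnc (hsep.closedBranch hdisj (hclosed lp h))
  refine ⟨fun lp hlp hnc => ⟨q ++ [k], hopen lp hlp hnc ▸ List.prefix_refl _, hnew⟩,
    fun lp lp' hlp hlp' hnc hnc' => (hopen lp hlp hnc).trans (hopen lp' hlp' hnc').symm, ?_⟩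
  intro hS2 lp hlp
  by_contra hnc
  exact hnc (Or.inl ⟨q ++ [k], _, hopen lp hlp hnc ▸ List.prefix_refl _, hnew, hS2⟩)

end MTab
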